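/- Suppose all bidders share a common finite type space Θ ⊆ ℝ_{≥0} with |Θ| ≥ 4, and n ≥ 2. Then the first-price auction choice rule with truthful bidding violates the indistinguishable corners condition for every bidder i: there exist θ_i, θ_i' ∈ Θ and θ_{-i}, θ_{-i}' such that φ^{FPA}(θ_i,θ_{-i}) = φ^{FPA}(θ_i',θ_{-i}), bidder i loses (receives allocation 0 and payment 0) at both (θ_i,θ_{-i}) and (θ_i,θ_{-i}'), and φ^{FPA}(θ_i,θ_{-i}') ≠ φ^{FPA}(θ_i',θ_{-i}'). -/
import Mathlib


namespace PrivacyPaper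

open Classical in
/-- The lowest-indexed bidder with the maximum value. -/
noncomputable def lowWinner {n : ℕ} (hn : 0 < n) (θ : Fin n → ℝ) : Fin n :=
  (Finset.univ.filter fun i => ∀ j, θ j ≤ θ i).min' (by
    haveI : Nonempty (Fin n) := ⟨⟨0, hn⟩⟩
    obtain ⟨i, hi⟩ := Finite.exists_max θ
    exact ⟨i, Finset.mem_filter.mpr ⟨Finset.mem_univ i, hi⟩⟩)

/-- The first-price auction choice rule with truthful bidding and lowest-index
tie-breaking: the winner gets the good and pays her value, losers get `(false, 0)`. -/
noncomputable def FPA {n : ℕ} (hn : 0 < n) (θ : Fin n → ℝ) : Fin n → Bool × ℝ :=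
  fun j => if j = lowWinner hn θ then (true, θ j) else (false, 0)

lemma erase_univ_nonempty {n : ℕ} (hn : 2 ≤ n) (i : Fin n) :
    ((Finset.univ : Finset (Fin n)).erase i).Nonempty := by
  rw [← Finset.card_pos, Finset.card_erase_of_mem (Finset.mem_univ _), Finset.card_univ,
    Fintype.card_fin]
  omega

/-- The highest value among bidders other than `i`. -/
noncomputable def maxOther {n : ℕ} (hn : 2 ≤ n) (i : Fin n) (θ : Fin n → ℝ) : ℝ :=
  ((Finset.univ : Finset (Fin n)).erase i).sup' (erase_univ_nonempty hn i) θ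

/-- The second-price auction choice rule with lowest-index tie-breaking: the winner gets
the good and pays the highest value among the other bidders, losers get `(false, 0)`. -/
noncomputable def SPA {n : ℕ} (hn : 2 ≤ n) (θ : Fin n → ℝ) : Fin n → Bool × ℝ :=
  fun j =>
    if j = lowWinner (by omega) θ then
      (true, maxOther hn (lowWinner (by omega : 0 < n) θ) θ)
    else (false, 0)

lemma lowWinner_isMax {n : ℕ} (hn : 0 < n) (θ : Fin n → ℝ) (j : Fin n) :
    θ j ≤ θ (lowWinner hn θ) := by
  have h : lowWinner hn θ ∈ Finset.univ.filter fun i => ∀ j, θ j ≤ θ i := by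
    unfold lowWinner; exact Finset.min'_mem _ _
  exact (Finset.mem_filter.mp h).2 j

lemma lowWinner_eq_of_forall_lt {n : ℕ} (hn : 0 < n) (θ : Fin n → ℝ) (i : Fin n)
    (h : ∀ j, j ≠ i → θ j < θ i) : lowWinner hn θ = i := by
  by_contra hne
  have h1 := lowWinner_isMax hn θ i
  have h2 := h _ hne
  linarith

lemma filter_eq_erase {n : ℕ} (hn : 2 ≤ n) (i : Fin n) (θ : Fin n → ℝ) (x : ℝ)
    (hθ : ∀ j, j ≠ i → θ j = x) (hi : θ i < x) :
    (Finset.univ.filter fun j => ∀ k, θ k ≤ θ j) =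
      (Finset.univ : Finset (Fin n)).erase i := by
  ext j
  simp only [Finset.mem_filter, Finset.mem_univ, true_and, Finset.mem_erase, and_true]
  constructor
  · intro h hji
    subst hji
    obtain ⟨k, hk⟩ := erase_univ_nonempty hn j
    have hkj : k ≠ j := (Finset.mem_erase.mp hk).1
    have := h k
    rw [hθ k hkj] at this
    linarith
  · intro hji k
    rw [hθ j hji]
    by_cases hk : k = i
    · subst hk; linarith
    · rw [hθ k hk]

lemma lowWinner_eq_min'_erase {n : ℕ} (hn : 2 ≤ n) (i : Fin n) (θ : Fin n → ℝ) (x : ℝ)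
    (hθ : ∀ j, j ≠ i → θ j = x) (hi : θ i < x) :
    lowWinner (by omega) θ = ((Finset.univ : Finset (Fin n)).erase i).min'
      (erase_univ_nonempty hn i) := by
  unfold lowWinner
  simp only [filter_eq_erase hn i θ x hθ hi]

/-- With a common type space of at least four values, the first-price auction choice rule
violates the indistinguishable corners condition for every bidder: bidder `i` loses (gets
`(false, 0)`) at `(a, t)` and `(a, t')`, the outcome does not depend on `a` vs `a'` in
column `t`, but it does in column `t'`. -/
theorem fpa_violates_indistinguishable_corners {n : ℕ} (hn : 2 ≤ n)
    (Θ : Finset ℝ) (hpos : ∀ x ∈ Θ, 0 ≤ x) (hcard : 4 ≤ Θ.card) (i : Fin n) :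
    ∃ (a a' : ℝ) (t t' : Fin n → ℝ),
      a ∈ Θ ∧ a' ∈ Θ ∧ (∀ j, t j ∈ Θ) ∧ (∀ j, t' j ∈ Θ) ∧
      FPA (by omega) (Function.update t i a) = FPA (by omega) (Function.update t i a') ∧
      FPA (by omega) (Function.update t i a) i = (false, 0) ∧
      FPA (by omega) (Function.update t' i a) i = (false, 0) ∧
      FPA (by omega) (Function.update t' i a) ≠ FPA (by omega) (Function.update t' i a') := by
  have hn0 : 0 < n := by omega
  set e := Θ.orderIsoOfFin rfl with he
  have hx : ∀ k : Fin Θ.card, (e k : ℝ) ∈ Θ := fun k => (e k).2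
  have hmono : ∀ k l : Fin Θ.card, k < l → (e k : ℝ) < (e l : ℝ) := by
    intro k l hkl
    exact Θ.orderIsoOfFin rfl |>.strictMono hkl
  let k0 : Fin Θ.card := ⟨0, by omega⟩
  let k1 : Fin Θ.card := ⟨1, by omega⟩
  let k2 : Fin Θ.card := ⟨2, by omega⟩
  let k3 : Fin Θ.card := ⟨3, by omega⟩
  set x0 : ℝ := (e k0 : ℝ)
  set x1 : ℝ := (e k1 : ℝ)
  set x2 : ℝ := (e k2 : ℝ)
  set x3 : ℝ := (e k3 : ℝ)
  have h01 : x0 < x1 := hmono k0 k1 (by simp [k0, k1, Fin.lt_def])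
  have h12 : x1 < x2 := hmono k1 k2 (by simp [k1, k2, Fin.lt_def])
  have h23 : x2 < x3 := hmono k2 k3 (by simp [k2, k3, Fin.lt_def])
  refine ⟨x0, x2, (fun _ => x3), (fun _ => x1), hx k0, hx k2,
    fun _ => hx k3, fun _ => hx k1, ?_, ?_, ?_, ?_⟩
  · -- FPA equal on column t
    set θa := Function.update (fun _ : Fin n => x3) i x0 with hθa
    set θb := Function.update (fun _ : Fin n => x3) i x2 with hθb
    have ha : ∀ j, j ≠ i → θa j = x3 := fun j hj => Function.update_of_ne hj _ _
    have hb : ∀ j, j ≠ i → θb j = x3 := fun j hj => Function.update_of_ne hj _ _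
    have hai : θa i = x0 := Function.update_self _ _ _
    have hbi : θb i = x2 := Function.update_self _ _ _
    have hwa := lowWinner_eq_min'_erase hn i θa x3 ha (by rw [hai]; linarith)
    have hwb := lowWinner_eq_min'_erase hn i θb x3 hb (by rw [hbi]; linarith)
    have hwni : ((Finset.univ : Finset (Fin n)).erase i).min' (erase_univ_nonempty hn i) ≠ i :=
      (Finset.mem_erase.mp (Finset.min'_mem _ _)).1
    funext j
    unfold FPA
    rw [hwa, hwb]
    by_cases hj : j = ((Finset.univ : Finset (Fin n)).erase i).min' (erase_univ_nonempty hn i)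
    · subst hj
      simp only [if_pos rfl]
      rw [ha _ hwni, hb _ hwni]
    · simp only [if_neg hj]
  · -- i loses at (a, t)
    set θa := Function.update (fun _ : Fin n => x3) i x0 with hθa
    have ha : ∀ j, j ≠ i → θa j = x3 := fun j hj => Function.update_of_ne hj _ _
    have hai : θa i = x0 := Function.update_self _ _ _
    have hwa := lowWinner_eq_min'_erase hn i θa x3 ha (by rw [hai]; linarith)
    have hwni : ((Finset.univ : Finset (Fin n)).erase i).min' (erase_univ_nonempty hn i) ≠ i :=
      (Finset.mem_erase.mp (Finset.min'_mem _ _)).1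
    unfold FPA
    rw [hwa, if_neg (fun h => hwni h.symm)]
  · -- i loses at (a, t')
    set θc := Function.update (fun _ : Fin n => x1) i x0 with hθc
    have hc : ∀ j, j ≠ i → θc j = x1 := fun j hj => Function.update_of_ne hj _ _
    have hci : θc i = x0 := Function.update_self _ _ _
    have hwc := lowWinner_eq_min'_erase hn i θc x1 hc (by rw [hci]; linarith)
    have hwni : ((Finset.univ : Finset (Fin n)).erase i).min' (erase_univ_nonempty hn i) ≠ i :=
      (Finset.mem_erase.mp (Finset.min'_mem _ _)).1
    unfold FPA
    rw [hwc, if_neg (fun h => hwni h.symm)]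
  · -- outcomes differ in column t'
    intro hEq
    set θc := Function.update (fun _ : Fin n => x1) i x0 with hθc
    set θd := Function.update (fun _ : Fin n => x1) i x2 with hθd
    have hc : ∀ j, j ≠ i → θc j = x1 := fun j hj => Function.update_of_ne hj _ _
    have hci : θc i = x0 := Function.update_self _ _ _
    have hdi : θd i = x2 := Function.update_self _ _ _
    have hwc := lowWinner_eq_min'_erase hn i θc x1 hc (by rw [hci]; linarith)
    have hwni : ((Finset.univ : Finset (Fin n)).erase i).min' (erase_univ_nonempty hn i) ≠ i :=
      (Finset.mem_erase.mp (Finset.min'_mem _ _)).1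
    have hwd : lowWinner hn0 θd = i := by
      apply lowWinner_eq_of_forall_lt
      intro j hj
      have hdj : θd j = x1 := Function.update_of_ne hj _ _
      rw [hdi, hdj]
      linarith
    have h1 : FPA hn0 θc i = (false, 0) := by
      unfold FPA
      rw [hwc, if_neg (fun h => hwni h.symm)]
    have h2 : FPA hn0 θd i = (true, x2) := by
      unfold FPA
      rw [hwd, if_pos rfl, hdi]
    have := congrFun hEq i
    rw [h1, h2] at this
    simp at this

end PrivacyPaper
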